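/- Let k ≥ 1, let d_1, d_2 ≥ 0 and let n_1, n_2 be nonnegative integers. Suppose that for i = 1, 2, every finite simple graph with maximum degree at most d_i and more than n_i vertices has an induced subgraph H with rep(H) ≥ k. Then every finite simple graph with maximum degree at most d_1 + d_2 + 1 and more than n_1 + n_2 vertices has an induced subgraph H with rep(H) ≥ k. (Equivalently, g(k,d_1) + g(k,d_2) ≥ g(k, d_1+d_2+1).) -/
import Mathlib

/-- The degree of a vertex: the number of its neighbors (graph on a finite type). -/
noncomputable def ndeg {V : Type*} (G : SimpleGraph V) (v : V) : ℕ :=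
  (G.neighborSet v).ncard

/-- The number of vertices of `G` whose degree equals `j`. -/
noncomputable def repCount {V : Type*} (G : SimpleGraph V) (j : ℕ) : ℕ :=
  {v : V | ndeg G v = j}.ncard

open Finset

section Aux

variable {V : Type*} [Fintype V] [DecidableEq V] (G : SimpleGraph V) [DecidableRel G.Adj]

/-- degree of `v` into the set `A`. -/
def degIn (A : Finset V) (v : V) : ℕ := (A ∩ G.neighborFinset v).card

/-- twice the number of edges inside `A`. -/
def Ssum (A : Finset V) : ℕ := ∑ v ∈ A, degIn G A v

lemma degIn_erase (A : Finset V) (v : V) : degIn G (A.erase v) v = degIn G A v := by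
  unfold degIn
  congr 1
  ext u
  simp only [mem_inter, mem_erase]
  constructor
  · rintro ⟨⟨_, hu⟩, hn⟩; exact ⟨hu, hn⟩
  · rintro ⟨hu, hn⟩
    refine ⟨⟨?_, hu⟩, hn⟩
    rintro rfl
    simp at hn

lemma Ssum_erase (A : Finset V) {v : V} (hv : v ∈ A) :
    Ssum G A = Ssum G (A.erase v) + 2 * degIn G A v := by
  classical
  have hstep : ∀ u ∈ A.erase v,
      degIn G A u = degIn G (A.erase v) u + (if v ∈ G.neighborFinset u then 1 else 0) := by
    intro u hu
    have h1 : (A.erase v) ∩ G.neighborFinset u = (A ∩ G.neighborFinset u).erase v := by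
      ext x; simp only [mem_inter, mem_erase]; tauto
    by_cases hvn : v ∈ G.neighborFinset u
    · have hv2 : v ∈ A ∩ G.neighborFinset u := mem_inter.mpr ⟨hv, hvn⟩
      have hpos : 0 < (A ∩ G.neighborFinset u).card := Finset.card_pos.mpr ⟨v, hv2⟩
      unfold degIn
      rw [h1, if_pos hvn, Finset.card_erase_of_mem hv2]
      omega
    · have hv2 : v ∉ A ∩ G.neighborFinset u := by
        simp only [mem_inter]; tauto
      unfold degIn
      rw [h1, if_neg hvn, Finset.erase_eq_of_notMem hv2, add_zero]
  have hsplit : Ssum G A = degIn G A v + ∑ u ∈ A.erase v, degIn G A u := by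
    unfold Ssum
    exact (Finset.add_sum_erase A (degIn G A) hv).symm
  have hsum : ∑ u ∈ A.erase v, degIn G A u
      = (∑ u ∈ A.erase v, degIn G (A.erase v) u)
        + ∑ u ∈ A.erase v, (if v ∈ G.neighborFinset u then 1 else 0) := by
    rw [← Finset.sum_add_distrib]
    exact Finset.sum_congr rfl hstep
  have hcount : (∑ u ∈ A.erase v, if v ∈ G.neighborFinset u then 1 else 0)
      = degIn G (A.erase v) v := by
    rw [← Finset.card_filter]
    unfold degIn
    congr 1
    ext u
    simp only [mem_filter, mem_inter, SimpleGraph.mem_neighborFinset]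
    exact and_congr_right fun _ => G.adj_comm u v
  have : Ssum G A = degIn G A v + (Ssum G (A.erase v) + degIn G (A.erase v) v) := by
    rw [hsplit, hsum, hcount]; rfl
  rw [this, degIn_erase]
  ring

lemma degIn_add_compl (A : Finset V) (v : V) :
    degIn G A v + degIn G Aᶜ v = (G.neighborFinset v).card := by
  unfold degIn
  rw [inter_comm A, inter_comm Aᶜ]
  rw [← Finset.filter_mem_eq_inter, ← Finset.filter_mem_eq_inter]
  have h := Finset.card_filter_add_card_filter_not (s := G.neighborFinset v)
    (p := fun x => x ∈ A)
  rw [← h]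
  congr 2
  ext x
  simp [Finset.mem_compl]

/-- Lovász partition lemma. -/
lemma lovasz_partition (d₁ d₂ : ℕ) (hdeg : ∀ v, (G.neighborFinset v).card ≤ d₁ + d₂ + 1) :
    ∃ A : Finset V, (∀ v ∈ A, degIn G A v ≤ d₁) ∧ (∀ v ∈ Aᶜ, degIn G Aᶜ v ≤ d₂) := by
  classical
  obtain ⟨A, -, hmin⟩ := Finset.exists_min_image (Finset.univ : Finset (Finset V))
    (fun B => (d₂ + 1) * Ssum G B + (d₁ + 1) * Ssum G Bᶜ) ⟨∅, Finset.mem_univ ∅⟩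
  simp only [Finset.mem_univ, forall_true_left, true_implies] at hmin
  refine ⟨A, ?_, ?_⟩
  · intro v hv
    by_contra hlt
    push_neg at hlt
    have hab : degIn G A v + degIn G Aᶜ v ≤ d₁ + d₂ + 1 := by
      rw [degIn_add_compl]; exact hdeg v
    have hbd : degIn G Aᶜ v ≤ d₂ := by omega
    have e1 : Ssum G A = Ssum G (A.erase v) + 2 * degIn G A v := Ssum_erase G A hv
    have hvA' : v ∈ (A.erase v)ᶜ := by simp
    have hcompl : ((A.erase v)ᶜ).erase v = Aᶜ := by
      ext u
      simp only [mem_erase, mem_compl]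
      constructor
      · rintro ⟨hne, h⟩; intro huA; exact h ⟨hne, huA⟩
      · intro h
        have hne : u ≠ v := by rintro rfl; exact h hv
        exact ⟨hne, fun hh => h hh.2⟩
    have e2 : Ssum G ((A.erase v)ᶜ) = Ssum G Aᶜ + 2 * degIn G Aᶜ v := by
      have h3 := Ssum_erase G ((A.erase v)ᶜ) hvA'
      rw [hcompl] at h3
      rw [h3, ← hcompl, degIn_erase, hcompl]
    have hmle := hmin (A.erase v)
    rw [e1, e2] at hmle
    have hkey : (d₂ + 1) * degIn G A v ≤ (d₁ + 1) * degIn G Aᶜ v := by nlinarith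
    have h1 : (d₂ + 1) * (d₁ + 1) ≤ (d₂ + 1) * degIn G A v := Nat.mul_le_mul_left _ hlt
    have h2 : (d₁ + 1) * degIn G Aᶜ v ≤ (d₁ + 1) * d₂ := Nat.mul_le_mul_left _ hbd
    nlinarith
  · intro v hv
    by_contra hlt
    push_neg at hlt
    have hab : degIn G A v + degIn G Aᶜ v ≤ d₁ + d₂ + 1 := by
      rw [degIn_add_compl]; exact hdeg v
    have had : degIn G A v ≤ d₁ := by omega
    have hvnA : v ∉ A := Finset.mem_compl.mp hv
    have e1 : Ssum G Aᶜ = Ssum G (Aᶜ.erase v) + 2 * degIn G Aᶜ v := Ssum_erase G Aᶜ hv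
    have hvB' : v ∈ (Aᶜ.erase v)ᶜ := by simp
    have hcompl : ((Aᶜ.erase v)ᶜ).erase v = A := by
      ext u
      simp only [mem_erase, mem_compl, not_and, not_not]
      constructor
      · rintro ⟨hne, h⟩; exact h hne
      · intro h
        have hne : u ≠ v := by rintro rfl; exact hvnA h
        exact ⟨hne, fun _ => h⟩
    have e2 : Ssum G ((Aᶜ.erase v)ᶜ) = Ssum G A + 2 * degIn G A v := by
      have h3 := Ssum_erase G ((Aᶜ.erase v)ᶜ) hvB'
      rw [hcompl] at h3
      rw [h3, ← hcompl, degIn_erase, hcompl]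
    have hmle := hmin ((Aᶜ.erase v)ᶜ)
    rw [compl_compl, e2, e1] at hmle
    have hkey : (d₁ + 1) * degIn G Aᶜ v ≤ (d₂ + 1) * degIn G A v := by nlinarith
    have h1 : (d₁ + 1) * (d₂ + 1) ≤ (d₁ + 1) * degIn G Aᶜ v := Nat.mul_le_mul_left _ hlt
    have h2 : (d₂ + 1) * degIn G A v ≤ (d₂ + 1) * d₁ := Nat.mul_le_mul_left _ had
    nlinarith

omit [DecidableEq V] in
lemma ndeg_eq_card (v : V) : ndeg G v = (G.neighborFinset v).card := by
  unfold ndeg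
  rw [SimpleGraph.neighborFinset_def, Set.ncard_eq_toFinset_card']

lemma ndeg_induce (A : Finset V) (v : ↥((A : Set V))) :
    ndeg (G.induce (A : Set V)) v = degIn G A (v : V) := by
  unfold ndeg degIn
  have h : Subtype.val '' ((G.induce (A : Set V)).neighborSet v)
      = ((A ∩ G.neighborFinset (v : V) : Finset V) : Set V) := by
    ext u
    simp only [Set.mem_image, SimpleGraph.mem_neighborSet, SimpleGraph.comap_adj,
      Function.Embedding.coe_subtype, Finset.coe_inter, Set.mem_inter_iff, Finset.mem_coe,
      SimpleGraph.mem_neighborFinset]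
    constructor
    · rintro ⟨⟨x, hx⟩, hadj, rfl⟩
      exact ⟨by simpa using hx, hadj⟩
    · rintro ⟨hu, hadj⟩
      exact ⟨⟨u, by simpa using hu⟩, hadj, rfl⟩
  rw [← Set.ncard_coe_finset, ← h, Set.ncard_image_of_injective _ Subtype.val_injective]

end Aux

section Iso

lemma ndeg_iso {V W : Type*} {G : SimpleGraph V} {G' : SimpleGraph W} (e : G ≃g G') (v : V) :
    ndeg G' (e v) = ndeg G v := by
  unfold ndeg
  have h : G'.neighborSet (e v) = ⇑e '' G.neighborSet v := by
    ext u
    obtain ⟨w, rfl⟩ := EquivLike.surjective e u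
    simp only [SimpleGraph.mem_neighborSet, Set.mem_image]
    constructor
    · intro hadj
      exact ⟨w, e.map_adj_iff.mp hadj, rfl⟩
    · rintro ⟨x, hx, hxe⟩
      have hxw : x = w := EquivLike.injective e hxe
      subst hxw
      exact e.map_adj_iff.mpr hx
  rw [h, Set.ncard_image_of_injective _ (EquivLike.injective e)]

lemma repCount_iso {V W : Type*} {G : SimpleGraph V} {G' : SimpleGraph W} (e : G ≃g G')
    (j : ℕ) : repCount G' j = repCount G j := by
  unfold repCount
  have h : {w | ndeg G' w = j} = ⇑e '' {v | ndeg G v = j} := by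
    ext u
    obtain ⟨w, rfl⟩ := EquivLike.surjective e u
    have hw : ndeg G' (e w) = ndeg G w := ndeg_iso e w
    simp only [Set.mem_setOf_eq, Set.mem_image]
    constructor
    · intro hdeg
      exact ⟨w, by rw [← hw]; exact hdeg, rfl⟩
    · rintro ⟨x, hx, hxe⟩
      have hxw : x = w := EquivLike.injective e hxe
      subst hxw
      rw [hw]; exact hx
  rw [h, Set.ncard_image_of_injective _ (EquivLike.injective e)]

/-- Iso between iterated induce and induce of the image set. -/
noncomputable def induceInduceIso {V : Type*} (G : SimpleGraph V) (s : Set V) (t : Set ↥s) :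
    (G.induce s).induce t ≃g G.induce (Subtype.val '' t) where
  toEquiv := Equiv.Set.image Subtype.val t Subtype.val_injective
  map_rel_iff' := by
    intro a b
    simp [Equiv.Set.image, Equiv.Set.imageOfInjOn]

end Iso

/-- Subadditivity for `g`: `g(k, d₁) + g(k, d₂) ≥ g(k, d₁ + d₂ + 1)`. -/
theorem stmt_9 (k d₁ d₂ n₁ n₂ : ℕ) (hk : 1 ≤ k)
    (h₁ : ∀ (V : Type) [Finite V] (G : SimpleGraph V), (∀ v, ndeg G v ≤ d₁) →
      n₁ < Nat.card V → ∃ (s : Set V) (j : ℕ), k ≤ repCount (G.induce s) j)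
    (h₂ : ∀ (V : Type) [Finite V] (G : SimpleGraph V), (∀ v, ndeg G v ≤ d₂) →
      n₂ < Nat.card V → ∃ (s : Set V) (j : ℕ), k ≤ repCount (G.induce s) j) :
    ∀ (V : Type) [Finite V] (G : SimpleGraph V), (∀ v, ndeg G v ≤ d₁ + d₂ + 1) →
      n₁ + n₂ < Nat.card V → ∃ (s : Set V) (j : ℕ), k ≤ repCount (G.induce s) j := by
  intro V _ G hdeg hcard
  classical
  have : Fintype V := Fintype.ofFinite V
  have hdeg' : ∀ v, (G.neighborFinset v).card ≤ d₁ + d₂ + 1 := by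
    intro v
    rw [← ndeg_eq_card]
    exact hdeg v
  obtain ⟨A, hA, hAc⟩ := lovasz_partition G d₁ d₂ hdeg'
  have hcards : A.card + Aᶜ.card = Nat.card V := by
    rw [Finset.card_compl, Nat.card_eq_fintype_card]
    have := Finset.card_le_univ A
    omega
  have hcase : n₁ < A.card ∨ n₂ < Aᶜ.card := by omega
  rcases hcase with hlt | hlt
  · have hfin : Finite ↥((A : Set V)) := Subtype.finite
    have hdegA : ∀ v : ↥((A : Set V)), ndeg (G.induce (A : Set V)) v ≤ d₁ := by
      intro v
      rw [ndeg_induce]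
      exact hA (v : V) (by simpa using v.2)
    have hcardA : n₁ < Nat.card ↥((A : Set V)) := by
      rw [Nat.card_coe_set_eq, Set.ncard_coe_finset]
      exact hlt
    obtain ⟨t, j, hkt⟩ := h₁ ↥((A : Set V)) (G.induce (A : Set V)) hdegA hcardA
    refine ⟨Subtype.val '' t, j, ?_⟩
    rw [repCount_iso (induceInduceIso G (A : Set V) t) j]
    exact hkt
  · have hfin : Finite ↥(((Aᶜ : Finset V) : Set V)) := Subtype.finite
    have hdegB : ∀ v : ↥(((Aᶜ : Finset V) : Set V)),
        ndeg (G.induce ((Aᶜ : Finset V) : Set V)) v ≤ d₂ := by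
      intro v
      rw [ndeg_induce]
      exact hAc (v : V) (by simpa using v.2)
    have hcardB : n₂ < Nat.card ↥(((Aᶜ : Finset V) : Set V)) := by
      rw [Nat.card_coe_set_eq, Set.ncard_coe_finset]
      exact hlt
    obtain ⟨t, j, hkt⟩ := h₂ ↥(((Aᶜ : Finset V) : Set V)) (G.induce ((Aᶜ : Finset V) : Set V))
      hdegB hcardB
    refine ⟨Subtype.val '' t, j, ?_⟩
    rw [repCount_iso (induceInduceIso G ((Aᶜ : Finset V) : Set V) t) j]
    exact hkt
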